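/- Let A be an integral NDA, and let ρ¹ = ρ¹₀,…,ρ¹ₙ and ρ² = ρ²₀,…,ρ²ₙ be two runs of A of length n such that val(ρ¹) ≤ val(ρ²). Then for every 0 ≤ i ≤ n, it holds that Γ(ρ¹₀,…,ρ¹ᵢ) − Γ(ρ²₀,…,ρ²ᵢ) ≤ M. -/

import Mathlib

/-!
Cutting a run after `i` steps gives `λ^i · val(ρ) = Γ(ρ₀,…,ρᵢ) + val(ρᵢ,…,ρₙ)`. Subtracting this
identity for the two runs, `val(ρ¹) ≤ val(ρ²)` leaves
`Γ(ρ¹₀,…,ρ¹ᵢ) − Γ(ρ²₀,…,ρ²ᵢ) ≤ val(ρ²ᵢ,…,ρ²ₙ)`, and the weight of any run is a geometric series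
bounded by `λ/(λ−1) · m_A = M/2`.
-/

/-- A nondeterministic integral discounted-sum automaton (NDA) over alphabet `σ`
with state type `Q`. -/
structure NDA (σ : Type) (Q : Type) where
  init : Set Q
  acc : Set Q
  delta : Set (Q × σ × Q)
  val : Q × σ × Q → ℕ
  fval : Q → ℕ
  lam : ℕ
  one_lt_lam : 1 < lam

namespace NDA

variable {σ Q : Type}

/-- The adjacency (transition) condition for a sequence of states along the word `w`. -/
def Steps (A : NDA σ Q) (w : List σ) (ρ : ℕ → Q) : Prop :=
  ∀ i : Fin w.length, (ρ (i : ℕ), w.get i, ρ ((i : ℕ) + 1)) ∈ A.delta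

/-- A run of `A` on `w`: starts in an initial state and follows transitions. -/
def IsRun (A : NDA σ Q) (w : List σ) (ρ : ℕ → Q) : Prop :=
  ρ 0 ∈ A.init ∧ A.Steps w ρ

/-- A run of `A` on `w` starting in the state `q`. -/
def IsRunFrom (A : NDA σ Q) (q : Q) (w : List σ) (ρ : ℕ → Q) : Prop :=
  ρ 0 = q ∧ A.Steps w ρ

/-- The discounted weight of the sequence of states `ρ` along the word `w`. -/
def runVal (A : NDA σ Q) (w : List σ) (ρ : ℕ → Q) : ℚ :=
  ∑ i : Fin w.length,
    ((A.lam : ℚ)⁻¹) ^ (i : ℕ) * (A.val (ρ (i : ℕ), w.get i, ρ ((i : ℕ) + 1)) : ℚ)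

/-- `A_[P→P'](w)`: minimal weight of a run on `w` from `P` to `P'` (`⊤` if none). -/
noncomputable def minVal (A : NDA σ Q) (P P' : Set Q) (w : List σ) : EReal :=
  sInf {x : EReal | ∃ ρ : ℕ → Q, ρ 0 ∈ P ∧ A.Steps w ρ ∧ ρ w.length ∈ P' ∧
    x = ((A.runVal w ρ : ℝ) : EReal)}

/-- `A_[P→_f P'](w)`: minimal weight including the final weight of an accepting
run on `w` from `P` ending in `P' ∩ α` (`⊤` if none). -/
noncomputable def minValF (A : NDA σ Q) (P P' : Set Q) (w : List σ) : EReal :=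
  sInf {x : EReal | ∃ ρ : ℕ → Q, ρ 0 ∈ P ∧ A.Steps w ρ ∧ ρ w.length ∈ P' ∩ A.acc ∧
    x = (((A.runVal w ρ + ((A.lam : ℚ)⁻¹) ^ w.length * (A.fval (ρ w.length) : ℚ) : ℚ) : ℝ) : EReal)}

/-- `A*(w)`: the value of the word `w`. -/
noncomputable def starVal (A : NDA σ Q) (w : List σ) : EReal :=
  A.minValF A.init Set.univ w

/-- `(w, qu, ql)` is a recoverable gap with respect to `z`. -/
def RecGap (A : NDA σ Q) (w z : List σ) (qu ql : Q) : Prop :=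
  A.minVal A.init {ql} w ≤ A.minVal A.init {qu} w ∧
  A.minVal A.init {qu} w +
      ((((A.lam : ℝ)⁻¹) ^ w.length : ℝ) : EReal) * A.minValF {qu} Set.univ z
    = A.starVal (w ++ z) ∧
  A.starVal (w ++ z) < ⊤

/-- `gap_{qu,ql}(w) = λ^{|w|}·(A_[Q₀→qu](w) − A_[Q₀→ql](w))`: the size of a gap. -/
noncomputable def gapSize (A : NDA σ Q) (w : List σ) (qu ql : Q) : EReal :=
  (((A.lam : ℝ) ^ w.length : ℝ) : EReal) *
    (A.minVal A.init {qu} w - A.minVal A.init {ql} w)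

/-- The set of sizes of recoverable gaps of `A`. -/
def gapSizes (A : NDA σ Q) : Set EReal :=
  {g | ∃ w z qu ql, A.RecGap w z qu ql ∧ g = A.gapSize w qu ql}

/-- `A` is deterministic (a DDA). -/
def Deterministic (A : NDA σ Q) : Prop :=
  (∃! q, q ∈ A.init) ∧ ∀ p s, {q | (p, s, q) ∈ A.delta}.Subsingleton

/-- `A` is determinizable: it has an equivalent DDA over the same alphabet with
the same discounting factor. -/
def Determinizable (A : NDA σ Q) : Prop :=
  ∃ (Q' : Type) (_ : Fintype Q') (D : NDA σ Q'),
    D.Deterministic ∧ D.lam = A.lam ∧ ∀ w : List σ, A.starVal w = D.starVal w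

/-- `m_A`: the maximal transition weight or final weight of `A`. -/
noncomputable def mA (A : NDA σ Q) [Fintype σ] [Fintype Q] : ℕ :=
  max ((Set.toFinite A.delta).toFinset.sup A.val)
      ((Set.toFinite A.acc).toFinset.sup A.fval)

/-- `M = 2·(λ/(λ−1))·m_A`. -/
noncomputable def M (A : NDA σ Q) [Fintype σ] [Fintype Q] : ℚ :=
  2 * ((A.lam : ℚ) / ((A.lam : ℚ) - 1)) * (A.mA : ℚ)

/-- `Γ` of the length-`i` prefix of a run on `w`: `λ^i` times its weight. -/
def gammaPfx (A : NDA σ Q) (w : List σ) (ρ : ℕ → Q) (i : ℕ) : ℚ :=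
  (A.lam : ℚ) ^ i * A.runVal (w.take i) ρ

/-- `𝒩 = λ^{|Q|²·2^{|Q|²}}·((|Q|−2)·M) + M`. -/
noncomputable def calN (A : NDA σ Q) [Fintype σ] [Fintype Q] : ℚ :=
  (A.lam : ℚ) ^ ((Fintype.card Q) ^ 2 * 2 ^ ((Fintype.card Q) ^ 2)) *
      (((Fintype.card Q : ℚ) - 2) * A.M) + A.M

/-- `C = (λ/(λ−1))·(𝒩·|Q| + 2·m_A)`. -/
noncomputable def calC (A : NDA σ Q) [Fintype σ] [Fintype Q] : ℚ :=
  ((A.lam : ℚ) / ((A.lam : ℚ) - 1)) * (A.calN * (Fintype.card Q : ℚ) + 2 * (A.mA : ℚ))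

/-- `w` has the `n`-separation property with respect to `(U, L, qu, z)`. -/
def SepPropWith (A : NDA σ Q) (n : ℚ) (w : List σ) (U L : Set Q) (qu : Q) (z : List σ) : Prop :=
  U ∪ L = Set.univ ∧ Disjoint U L ∧ U.Nonempty ∧ L.Nonempty ∧
  (∀ qu' ∈ U, ∀ ql ∈ L,
    (((A.lam : ℝ) ^ w.length : ℝ) : EReal) *
        (A.minVal A.init {qu'} w - A.minVal A.init {ql} w) > ((n : ℝ) : EReal)) ∧
  qu ∈ U ∧ ∀ ql ∈ L, A.RecGap w z qu ql

/-- `w` has the `n`-separation property. -/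
def SepProp (A : NDA σ Q) (n : ℚ) (w : List σ) : Prop :=
  ∃ U L qu z, A.SepPropWith n w U L qu z

end NDA

namespace NDA

variable {σ Q : Type} (A : NDA σ Q)

lemma runVal_nonneg (w : List σ) (ρ : ℕ → Q) : 0 ≤ A.runVal w ρ :=
  Finset.sum_nonneg fun _ _ => by positivity

lemma one_lt_lam_cast : (1 : ℚ) < A.lam := by exact_mod_cast A.one_lt_lam

@[simp]
lemma runVal_nil (ρ : ℕ → Q) : A.runVal [] ρ = 0 := rfl

lemma runVal_cons (a : σ) (w : List σ) (ρ : ℕ → Q) :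
    A.runVal (a :: w) ρ =
      A.val (ρ 0, a, ρ 1) + (A.lam : ℚ)⁻¹ * A.runVal w (fun j => ρ (j + 1)) := by
  simp only [runVal, List.length_cons, Fin.sum_univ_succ, Finset.mul_sum]
  congr 1
  · simp
  · refine Finset.sum_congr rfl fun j _ => ?_
    simp only [Fin.val_succ, pow_succ, inv_pow, List.get_eq_getElem, List.getElem_cons_succ]
    ring

lemma runVal_append (u v : List σ) (ρ : ℕ → Q) :
    A.runVal (u ++ v) ρ =
      A.runVal u ρ + (A.lam : ℚ)⁻¹ ^ u.length * A.runVal v (fun j => ρ (u.length + j)) := by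
  induction u generalizing ρ with
  | nil => simp
  | cons a u ih =>
    simp only [List.cons_append, runVal_cons, ih, List.length_cons]
    simp only [add_right_comm _ 1, pow_succ']
    ring

lemma lam_pow_mul_runVal_eq_gammaPfx_add {w : List σ} (ρ : ℕ → Q) {i : ℕ}
    (hi : i ≤ w.length) :
    (A.lam : ℚ) ^ i * A.runVal w ρ =
      A.gammaPfx w ρ i + A.runVal (w.drop i) (fun j => ρ (i + j)) := by
  have hlam : (A.lam : ℚ) ≠ 0 := by linarith [A.one_lt_lam_cast]
  conv_lhs => rw [← List.take_append_drop i w, runVal_append]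
  rw [List.length_take_of_le hi, gammaPfx, mul_add, ← mul_assoc, ← mul_pow,
    mul_inv_cancel₀ hlam, one_pow, one_mul]

variable {A} in
lemma Steps.drop {w : List σ} {ρ : ℕ → Q} (h : A.Steps w ρ) (i : ℕ) :
    A.Steps (w.drop i) (fun j => ρ (i + j)) := by
  intro j
  have hj : i + j < w.length := by have := j.isLt; simp at this; omega
  simpa [add_assoc] using h ⟨i + j, hj⟩

lemma runVal_le_of_steps {w : List σ} {ρ : ℕ → Q} (h : A.Steps w ρ) {m : ℕ}
    (hm : ∀ t ∈ A.delta, A.val t ≤ m) :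
    A.runVal w ρ ≤ (A.lam : ℚ) / (A.lam - 1) * m := by
  have hlam := A.one_lt_lam_cast
  calc A.runVal w ρ ≤ ∑ j : Fin w.length, (A.lam : ℚ)⁻¹ ^ (j : ℕ) * m :=
        Finset.sum_le_sum fun j _ => by gcongr; exact_mod_cast hm _ (h j)
    _ = (∑ j ∈ Finset.range w.length, (A.lam : ℚ)⁻¹ ^ j) * m := by
        rw [← Finset.sum_mul, Fin.sum_univ_eq_sum_range (fun j => (A.lam : ℚ)⁻¹ ^ j)]
    _ ≤ (A.lam : ℚ)⁻¹ ^ 0 / (1 - (A.lam : ℚ)⁻¹) * m := by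
        gcongr
        rw [Finset.range_eq_Ico]
        exact geom_sum_Ico_le_of_lt_one (by positivity) (inv_lt_one_of_one_lt₀ hlam)
    _ = (A.lam : ℚ) / (A.lam - 1) * m := by
        field_simp

lemma val_le_mA [Fintype σ] [Fintype Q] {t : Q × σ × Q} (ht : t ∈ A.delta) :
    A.val t ≤ A.mA :=
  (Finset.le_sup ((Set.Finite.mem_toFinset _).mpr ht)).trans (le_max_left _ _)

lemma lam_div_mul_mA_le_M [Fintype σ] [Fintype Q] :
    (A.lam : ℚ) / (A.lam - 1) * A.mA ≤ A.M := by
  have hlam := A.one_lt_lam_cast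
  have : 0 ≤ (A.lam : ℚ) / (A.lam - 1) * A.mA :=
    mul_nonneg (div_nonneg (by linarith) (by linarith)) (Nat.cast_nonneg _)
  rw [M]
  linarith

end NDA

theorem gap_bounded_along_prefixes_general {σ Q : Type} [Fintype σ] [Fintype Q]
    (A : NDA σ Q) (w : List σ) (ρ1 ρ2 : ℕ → Q)
    (h2 : A.IsRun w ρ2)
    (hval : A.runVal w ρ1 ≤ A.runVal w ρ2) :
    ∀ i ≤ w.length, A.gammaPfx w ρ1 i - A.gammaPfx w ρ2 i ≤ A.M := by
  intro i hi
  have hsplit1 := A.lam_pow_mul_runVal_eq_gammaPfx_add ρ1 hi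
  have hsplit2 := A.lam_pow_mul_runVal_eq_gammaPfx_add ρ2 hi
  have hscaled : (A.lam : ℚ) ^ i * A.runVal w ρ1 ≤ (A.lam : ℚ) ^ i * A.runVal w ρ2 :=
    mul_le_mul_of_nonneg_left hval (by positivity)
  have htail1 := A.runVal_nonneg (w.drop i) (fun j => ρ1 (i + j))
  have htail2 := A.runVal_le_of_steps (h2.2.drop i) fun _ => A.val_le_mA
  linarith [A.lam_div_mul_mA_le_M]

/-- If `val(ρ¹) ≤ val(ρ²)` then at every step `0 ≤ i ≤ n` the normalized
gap `Γ(ρ¹₀,…,ρ¹ᵢ) − Γ(ρ²₀,…,ρ²ᵢ)` is at most `M`. -/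
theorem gap_bounded_along_prefixes {σ Q : Type} [Fintype σ] [Fintype Q]
    (A : NDA σ Q) (w : List σ) (ρ1 ρ2 : ℕ → Q)
    (h1 : A.IsRun w ρ1) (h2 : A.IsRun w ρ2)
    (hval : A.runVal w ρ1 ≤ A.runVal w ρ2) :
    ∀ i ≤ w.length, A.gammaPfx w ρ1 i - A.gammaPfx w ρ2 i ≤ A.M :=
  gap_bounded_along_prefixes_general A w ρ1 ρ2 h2 hval
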